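/- Pointwise minimality: Suppose the rate-function family satisfies the growth conditions (G1) and (G2), I_θ(0) = 0 for all θ ∈ Θ, J : Θ → ℝ is continuous, and the LDP lower bound holds at every θ ∈ Θ. Fix r > 0 and δ > 0. Let (H̄_T)_{T>0} be an eventually equi-upper semicontinuous family of Borel measurable functions E → ℝ and (H̲_T)_{T>0} an eventually equi-lower semicontinuous family of Borel measurable functions E → ℝ satisfying, for every θ ∈ Θ, limsup_{T→∞} (1/b_T) log P_θ(J(θ) ∉ [H̲_T(θ̂_T), H̄_T(θ̂_T)]) ≤ −r. Then for every θ ∈ Θ, limsup_{T→∞} (J̄^δ_{T,r}(θ) − H̄_T(θ)) ≤ 0 and liminf_{T→∞} (J̲^δ_{T,r}(θ) − H̲_T(θ)) ≥ 0. -/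

import Mathlib

/-!
Two estimates meet at `θ`. First, (G1) and (G2) force every `θ' ∈ Θ` with
`a_T (θ - θ') ∈ S^δ_{θ',r}` to approach `θ` as `T → ∞`: otherwise `S_{θ',r}` would contain points
`ϑ` with `‖ϑ‖ ≳ a_T ‖θ - θ'‖`, which is too large for bounded `θ'` by (G1) and for escaping `θ'`
by (G2). Since `I_θ(0) = 0` the point `θ` itself qualifies, so by continuity of `J` both
`J̄^δ_{T,r}(θ)` and `J̲^δ_{T,r}(θ)` tend to `J(θ)`.

Second, if `H̄_T(θ) < J(θ) - ε` for arbitrarily large `T`, equi-upper semicontinuity makes the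
interval `[H̲_T(θ̂_T), H̄_T(θ̂_T)]` miss `J(θ)` whenever `θ̂_T` lies in a fixed ball around `θ`.
By the LDP lower bound and `I_θ(0) = 0` that event is not exponentially small, contradicting
accuracy at rate `r > 0`. The same argument applies to `-H̲_T`.
-/

set_option autoImplicit false

open Filter Topology Metric Set MeasureTheory

noncomputable section

variable {E : Type*} [NormedAddCommGroup E] [NormedSpace ℝ E]

/-- The sublevel set `S_{θ,r} = {ϑ ∈ E : I_θ(ϑ) ≤ r}` of the rate function. -/
def sublevelSet (I : E → E → ENNReal) (θ : E) (r : ℝ) : Set E :=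
  {ϑ : E | I θ ϑ ≤ ENNReal.ofReal r}

/-- The open `δ`-fattening `S^δ_{θ,r}` of the sublevel set, where `S^0_{θ,r} = S_{θ,r}`;
for `δ > 0` it is the set of points at distance `< δ` from `S_{θ,r}`, i.e. the union of
open balls of radius `δ` around points of `S_{θ,r}`. -/
def fatSublevel (I : E → E → ENNReal) (θ : E) (r δ : ℝ) : Set E :=
  if δ = 0 then sublevelSet I θ r
  else ⋃ ϑ ∈ sublevelSet I θ r, Metric.ball ϑ δ

/-- Growth condition (G1): for sequences `θ_n ∈ Θ` with `sup_n ‖θ_n‖ < ∞` and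
`‖ϑ_n‖ → ∞`, `I_{θ_n}(ϑ_n) → ∞`. -/
def GrowthG1 (Θ : Set E) (I : E → E → ENNReal) : Prop :=
  ∀ θs ϑs : ℕ → E, (∀ n, θs n ∈ Θ) → (∃ C : ℝ, ∀ n, ‖θs n‖ ≤ C) →
    Tendsto (fun n => ‖ϑs n‖) atTop atTop →
    Tendsto (fun n => I (θs n) (ϑs n)) atTop (nhds ⊤)

/-- Growth condition (G2): for sequences `θ_n ∈ Θ` with `‖θ_n‖ → ∞` and
`‖ϑ_n‖/‖θ_n‖ → ∞`, `limsup_n I_{θ_n}(ϑ_n) = ∞`. -/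
def GrowthG2 (Θ : Set E) (I : E → E → ENNReal) : Prop :=
  ∀ θs ϑs : ℕ → E, (∀ n, θs n ∈ Θ) →
    Tendsto (fun n => ‖θs n‖) atTop atTop →
    Tendsto (fun n => ‖ϑs n‖ / ‖θs n‖) atTop atTop →
    Filter.limsup (fun n => I (θs n) (ϑs n)) atTop = ⊤

/-- The upper confidence bound `J̄^δ_{T,r}(θ') = sup {J(θ) : θ ∈ Θ, a_T (θ' - θ) ∈ S^δ_{θ,r}}`. -/
def upperCB (Θ : Set E) (I : E → E → ENNReal) (J : E → ℝ) (r δ : ℝ) (a : ℝ → ℝ)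
    (T : ℝ) (θ' : E) : ℝ :=
  sSup (J '' {θ : E | θ ∈ Θ ∧ a T • (θ' - θ) ∈ fatSublevel I θ r δ})

/-- The lower confidence bound `J̲^δ_{T,r}(θ') = inf {J(θ) : θ ∈ Θ, a_T (θ' - θ) ∈ S^δ_{θ,r}}`. -/
def lowerCB (Θ : Set E) (I : E → E → ENNReal) (J : E → ℝ) (r δ : ℝ) (a : ℝ → ℝ)
    (T : ℝ) (θ' : E) : ℝ :=
  sInf (J '' {θ : E | θ ∈ Θ ∧ a T • (θ' - θ) ∈ fatSublevel I θ r δ})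

variable {Ω : Type*} [MeasurableSpace Ω]

/-- LDP lower bound at `θ0` for the family `a_T (θ̂_T − θ0)` with speed `b_T`:
for every open `G ⊆ E`,
`liminf_{T→∞} (1/b_T) log P(a_T(θ̂_T − θ0) ∈ G) ≥ − inf_{ϑ ∈ G} I(ϑ)`. -/
def LDPLowerAt (P : Measure Ω) (θhat : ℝ → Ω → E) (a b : ℝ → ℝ)
    (Irate : E → ENNReal) (θ0 : E) : Prop :=
  ∀ G : Set E, IsOpen G →
    -(((⨅ ϑ ∈ G, Irate ϑ) : ENNReal) : EReal) ≤
      Filter.liminf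
        (fun T => (((b T)⁻¹ : ℝ) : EReal) *
          ENNReal.log (P {ω | a T • (θhat T ω - θ0) ∈ G})) atTop

/-- LDP upper bound at `θ0` for the family `a_T (θ̂_T − θ0)` with speed `b_T`:
for every closed `F ⊆ E`,
`limsup_{T→∞} (1/b_T) log P(a_T(θ̂_T − θ0) ∈ F) ≤ − inf_{ϑ ∈ F} I(ϑ)`. -/
def LDPUpperAt (P : Measure Ω) (θhat : ℝ → Ω → E) (a b : ℝ → ℝ)
    (Irate : E → ENNReal) (θ0 : E) : Prop :=
  ∀ F : Set E, IsClosed F →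
    Filter.limsup
      (fun T => (((b T)⁻¹ : ℝ) : EReal) *
        ENNReal.log (P {ω | a T • (θhat T ω - θ0) ∈ F})) atTop ≤
      -(((⨅ ϑ ∈ F, Irate ϑ) : ENNReal) : EReal)

/-- Eventual equi-upper semicontinuity at a point. -/
def EvEquiUSCAt {W : Type*} [PseudoMetricSpace W] (φ : ℝ → W → ℝ) (w0 : W) : Prop :=
  ∀ ε > (0 : ℝ), ∃ δ > (0 : ℝ), ∃ T0 > (0 : ℝ),
    ∀ T ≥ T0, ∀ w ∈ Metric.closedBall w0 δ, φ T w - φ T w0 < ε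

/-- Eventual equi-lower semicontinuity at a point: `(−φ_T)` is eventually equi-u.s.c. -/
def EvEquiLSCAt {W : Type*} [PseudoMetricSpace W] (φ : ℝ → W → ℝ) (w0 : W) : Prop :=
  EvEquiUSCAt (fun T w => -φ T w) w0

/-- Eventual equicontinuity at a point. -/
def EvEquicontinuousAt {W : Type*} [PseudoMetricSpace W] (φ : ℝ → W → ℝ) (w0 : W) : Prop :=
  ∀ ε > (0 : ℝ), ∃ δ > (0 : ℝ), ∃ T0 > (0 : ℝ),
    ∀ T ≥ T0, ∀ w ∈ Metric.closedBall w0 δ, |φ T w - φ T w0| < ε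

section RateGrowth

variable {Θ : Set E} {I : E → E → ENNReal}

section

omit [NormedSpace ℝ E]

lemma mem_fatSublevel_iff {θ : E} {r δ : ℝ} (hδ : δ ≠ 0) {x : E} :
    x ∈ fatSublevel I θ r δ ↔ ∃ ϑ, I θ ϑ ≤ ENNReal.ofReal r ∧ dist x ϑ < δ := by
  simp [fatSublevel, hδ, sublevelSet, Metric.mem_ball]

lemma zero_mem_fatSublevel {θ : E} (hθ : I θ 0 = 0) (r : ℝ) {δ : ℝ} (hδ : 0 < δ) :
    (0 : E) ∈ fatSublevel I θ r δ :=
  (mem_fatSublevel_iff hδ.ne').2 ⟨0, by simp [hθ], by simpa using hδ⟩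

lemma GrowthG1.exists_ofReal_lt (hG1 : GrowthG1 Θ I) {θs ϑs : ℕ → E} (hθs : ∀ n, θs n ∈ Θ)
    {C : ℝ} (hbdd : ∃ᶠ n in atTop, ‖θs n‖ ≤ C) (hϑs : Tendsto (fun n => ‖ϑs n‖) atTop atTop)
    (r : ℝ) : ∃ n, ENNReal.ofReal r < I (θs n) (ϑs n) := by
  obtain ⟨φ, hφ, hφC⟩ := extraction_of_frequently_atTop hbdd
  have hI := hG1 (θs ∘ φ) (ϑs ∘ φ) (fun n => hθs _) ⟨C, hφC⟩ (hϑs.comp hφ.tendsto_atTop)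
  obtain ⟨n, hn⟩ := (hI.eventually (eventually_gt_nhds ENNReal.ofReal_lt_top)).exists
  exact ⟨φ n, hn⟩

lemma GrowthG2.exists_ofReal_lt (hG2 : GrowthG2 Θ I) {θs ϑs : ℕ → E} (hθs : ∀ n, θs n ∈ Θ)
    (hθ : Tendsto (fun n => ‖θs n‖) atTop atTop)
    (hratio : Tendsto (fun n => ‖ϑs n‖ / ‖θs n‖) atTop atTop) (r : ℝ) :
    ∃ n, ENNReal.ofReal r < I (θs n) (ϑs n) := by
  by_contra! h
  have hle : limsup (fun n => I (θs n) (ϑs n)) atTop ≤ ENNReal.ofReal r :=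
    limsup_le_of_le (by isBoundedDefault) (Eventually.of_forall h)
  rw [hG2 θs ϑs hθs hθ hratio, top_le_iff] at hle
  exact ENNReal.ofReal_ne_top hle

lemma exists_ofReal_lt_of_mul_norm_sub_le (hG1 : GrowthG1 Θ I) (hG2 : GrowthG2 Θ I) (θ : E)
    {θs ϑs : ℕ → E} (hθs : ∀ n, θs n ∈ Θ) {c : ℕ → ℝ} (hc : Tendsto c atTop atTop)
    {ε : ℝ} (hε : 0 < ε) (hfar : ∀ n, ε ≤ ‖θ - θs n‖)
    (hnorm : ∀ n, c n * ‖θ - θs n‖ ≤ ‖ϑs n‖) (r : ℝ) :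
    ∃ n, ENNReal.ofReal r < I (θs n) (ϑs n) := by
  by_cases hbdd : ∃ C, ∃ᶠ n in atTop, ‖θs n‖ ≤ C
  · obtain ⟨C, hC⟩ := hbdd
    refine hG1.exists_ofReal_lt hθs hC (tendsto_atTop_mono' _ ?_ (hc.atTop_mul_const hε)) r
    filter_upwards [hc.eventually_ge_atTop 0] with n hn
    exact (mul_le_mul_of_nonneg_left (hfar n) hn).trans (hnorm n)
  · push Not at hbdd
    have hθs_top : Tendsto (fun n => ‖θs n‖) atTop atTop :=
      tendsto_atTop.2 fun C => (hbdd C).mono fun n h => h.le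
    refine hG2.exists_ofReal_lt hθs hθs_top
      (tendsto_atTop_mono' _ ?_ (hc.atTop_div_const two_pos)) r
    filter_upwards [hc.eventually_ge_atTop 0, hθs_top.eventually_ge_atTop (2 * ‖θ‖),
      hθs_top.eventually_gt_atTop 0] with n hc0 hθ2 hpos
    have hhalf : ‖θs n‖ / 2 ≤ ‖θ - θs n‖ := by
      have := norm_sub_norm_le (θs n) θ
      rw [norm_sub_rev] at this
      linarith
    rw [le_div_iff₀ hpos]
    linarith [hnorm n, mul_le_mul_of_nonneg_left hhalf hc0]

end

lemma eventually_norm_sub_le_of_smul_mem_fatSublevel (hG1 : GrowthG1 Θ I)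
    (hG2 : GrowthG2 Θ I) {a : ℝ → ℝ} (ha : Tendsto a atTop atTop) {r δ : ℝ} (hδ : 0 < δ)
    (θ : E) {ε : ℝ} (hε : 0 < ε) :
    ∀ᶠ T in atTop, ∀ θ' ∈ Θ, a T • (θ - θ') ∈ fatSublevel I θ' r δ → ‖θ - θ'‖ ≤ ε := by
  by_contra h
  simp only [not_eventually, not_forall, not_le, exists_prop] at h
  obtain ⟨Ts, hTs, hbad⟩ := exists_seq_forall_of_frequently h
  choose θs hθs hmem hfar using hbad
  choose ϑs hI hdist using fun n => (mem_fatSublevel_iff hδ.ne').1 (hmem n)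
  -- the shift by `δ` is absorbed into the coefficient because `ε ≤ ‖θ - θs n‖`
  have hnorm : ∀ n, (|a (Ts n)| - δ / ε) * ‖θ - θs n‖ ≤ ‖ϑs n‖ := by
    intro n
    have hsmul : |a (Ts n)| * ‖θ - θs n‖ < ‖ϑs n‖ + δ := by
      rw [← Real.norm_eq_abs, ← norm_smul]
      linarith [norm_le_norm_add_norm_sub' (a (Ts n) • (θ - θs n)) (ϑs n),
        dist_eq_norm (a (Ts n) • (θ - θs n)) (ϑs n), hdist n]
    have hshift : δ ≤ δ / ε * ‖θ - θs n‖ := by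
      rw [div_mul_eq_mul_div, le_div_iff₀ hε]
      exact mul_le_mul_of_nonneg_left (hfar n).le hδ.le
    linarith
  have hc : Tendsto (fun n => |a (Ts n)| - δ / ε) atTop atTop := by
    simpa only [sub_eq_add_neg, Function.comp_apply] using
      tendsto_atTop_add_const_right _ (-(δ / ε)) (tendsto_abs_atTop_atTop.comp (ha.comp hTs))
  obtain ⟨n, hn⟩ :=
    exists_ofReal_lt_of_mul_norm_sub_le hG1 hG2 θ hθs hc hε (fun n => (hfar n).le) hnorm r
  exact (hI n).not_gt hn

lemma eventually_upperCB_le_and_le_lowerCB (hG1 : GrowthG1 Θ I) (hG2 : GrowthG2 Θ I)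
    (hI0 : ∀ θ ∈ Θ, I θ 0 = 0) {J : E → ℝ} (hJ : ContinuousOn J Θ) {a : ℝ → ℝ}
    (ha : Tendsto a atTop atTop) {r δ : ℝ} (hδ : 0 < δ) {θ : E} (hθ : θ ∈ Θ) {ε : ℝ}
    (hε : 0 < ε) :
    ∀ᶠ T in atTop, upperCB Θ I J r δ a T θ ≤ J θ + ε ∧ J θ - ε ≤ lowerCB Θ I J r δ a T θ := by
  obtain ⟨η, hη, hJη⟩ := Metric.continuousWithinAt_iff.1 (hJ θ hθ) ε hε
  filter_upwards [eventually_norm_sub_le_of_smul_mem_fatSublevel hG1 hG2 ha hδ θ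
    (half_pos hη)] with T hT
  set A := J '' {θ' : E | θ' ∈ Θ ∧ a T • (θ - θ') ∈ fatSublevel I θ' r δ}
  have hθA : J θ ∈ A := ⟨θ, ⟨hθ, by simpa using zero_mem_fatSublevel (hI0 θ hθ) r hδ⟩, rfl⟩
  have hA : A ⊆ Icc (J θ - ε) (J θ + ε) := by
    rintro _ ⟨θ', ⟨hθ', hmem⟩, rfl⟩
    have hclose : dist θ' θ < η := by
      rw [dist_comm, dist_eq_norm]
      linarith [hT θ' hθ' hmem]
    have hJclose := hJη hθ' hclose
    rw [Real.dist_eq, abs_lt] at hJclose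
    constructor <;> linarith [hJclose.1, hJclose.2]
  exact ⟨csSup_le ⟨_, hθA⟩ fun x hx => (hA hx).2, le_csInf ⟨_, hθA⟩ fun x hx => (hA hx).1⟩

end RateGrowth

lemma inv_mul_log_measure_mono (μ : Measure Ω) {b : ℝ} (hb : 0 ≤ b) {s t : Set Ω}
    (h : s ⊆ t) :
    ((b⁻¹ : ℝ) : EReal) * ENNReal.log (μ s) ≤ ((b⁻¹ : ℝ) : EReal) * ENNReal.log (μ t) :=
  mul_le_mul_of_nonneg_left (ENNReal.log_monotone (measure_mono h))
    (by exact_mod_cast inv_nonneg.2 hb)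

section LDPLower

variable {P : Measure Ω} {θhat : ℝ → Ω → E} {a b : ℝ → ℝ} {Irate : E → ENNReal} {θ0 : E}

lemma LDPLowerAt.zero_le_liminf (hLDP : LDPLowerAt P θhat a b Irate θ0) {G : Set E}
    (hG : IsOpen G) (h0 : (0 : E) ∈ G) (hI : Irate 0 = 0) :
    0 ≤ liminf (fun T => (((b T)⁻¹ : ℝ) : EReal) *
      ENNReal.log (P {ω | a T • (θhat T ω - θ0) ∈ G})) atTop := by
  have hinf : ⨅ ϑ ∈ G, Irate ϑ = 0 := nonpos_iff_eq_zero.1 ((biInf_le _ h0).trans hI.le)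
  simpa [hinf] using hLDP G hG

lemma LDPLowerAt.eventually_not_preimage_closedBall_subset (hLDP : LDPLowerAt P θhat a b Irate θ0)
    (hb : ∀ T, 0 ≤ b T) (ha : Tendsto a atTop atTop) (hI : Irate 0 = 0) {S : ℝ → Set Ω}
    (hS : limsup (fun T => (((b T)⁻¹ : ℝ) : EReal) * ENNReal.log (P (S T))) atTop < 0)
    {ρ : ℝ} (hρ : 0 < ρ) :
    ∀ᶠ T in atTop, ¬ θhat T ⁻¹' closedBall θ0 ρ ⊆ S T := by
  by_contra h
  simp only [not_eventually, not_not] at h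
  have hball : ∀ᶠ T in atTop,
      {ω | a T • (θhat T ω - θ0) ∈ ball (0 : E) 1} ⊆ θhat T ⁻¹' closedBall θ0 ρ := by
    filter_upwards [ha.eventually_ge_atTop ρ⁻¹] with T hT ω hω
    rw [mem_ofPred_eq, mem_ball_zero_iff, norm_smul] at hω
    rw [mem_preimage, mem_closedBall, dist_eq_norm]
    have hlt : ρ⁻¹ * ‖θhat T ω - θ0‖ < 1 :=
      (mul_le_mul_of_nonneg_right (hT.trans (le_abs_self _)) (norm_nonneg _)).trans_lt hω
    rw [inv_mul_lt_iff₀ hρ, mul_one] at hlt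
    exact hlt.le
  refine hS.not_ge ((hLDP.zero_le_liminf isOpen_ball (mem_ball_self one_pos) hI).trans
    (liminf_le_limsup_of_frequently_le ?_))
  exact (h.and_eventually hball).mono fun T ⟨hsub, hB⟩ =>
    inv_mul_log_measure_mono P (hb T) (hB.trans hsub)

lemma LDPLowerAt.eventually_sub_le_of_evEquiUSCAt (hLDP : LDPLowerAt P θhat a b Irate θ0)
    (hb : ∀ T, 0 ≤ b T) (ha : Tendsto a atTop atTop) (hI : Irate 0 = 0) {H : ℝ → E → ℝ}
    (hH : EvEquiUSCAt H θ0) {S : ℝ → Set Ω}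
    (hS : limsup (fun T => (((b T)⁻¹ : ℝ) : EReal) * ENNReal.log (P (S T))) atTop < 0)
    {c : ℝ} (hHS : ∀ T ω, H T (θhat T ω) < c → ω ∈ S T)
    {ε : ℝ} (hε : 0 < ε) :
    ∀ᶠ T in atTop, c - ε ≤ H T θ0 := by
  obtain ⟨ρ, hρ, T0, -, hρH⟩ := hH ε hε
  filter_upwards [hLDP.eventually_not_preimage_closedBall_subset hb ha hI hS hρ, eventually_ge_atTop T0]
    with T hT hT0
  by_contra! hlt
  exact hT fun ω hω => hHS T ω (by linarith [hρH T hT0 _ hω])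

end LDPLower

section EReal

variable {α : Type*} {l : Filter α} {f : α → ℝ}

lemma limsup_coe_le_zero_of_forall_eventually_le (h : ∀ ε > 0, ∀ᶠ x in l, f x ≤ ε) :
    limsup (fun x => (f x : EReal)) l ≤ 0 := by
  refine EReal.le_of_forall_lt_iff_le.1 fun z hz => limsup_le_of_le (by isBoundedDefault) ?_
  filter_upwards [h z (by exact_mod_cast hz)] with x hx
  exact_mod_cast hx

lemma zero_le_liminf_coe_of_forall_eventually_ge (h : ∀ ε > 0, ∀ᶠ x in l, -ε ≤ f x) :
    0 ≤ liminf (fun x => (f x : EReal)) l := by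
  refine EReal.ge_of_forall_gt_iff_ge.1 fun z hz => le_liminf_of_le (by isBoundedDefault) ?_
  filter_upwards [h (-z) (neg_pos.2 (by exact_mod_cast hz))] with x hx
  rw [neg_neg] at hx
  exact_mod_cast hx

end EReal

theorem stmt10_general (Θ : Set E) (I : E → E → ENNReal) (J : E → ℝ) (P : E → Measure Ω)
    (θhat : ℝ → Ω → E) (b a : ℝ → ℝ) (hbpos : ∀ T, 0 < b T) (hatop : Tendsto a atTop atTop)
    (hG1 : GrowthG1 Θ I) (hG2 : GrowthG2 Θ I)
    (hI0 : ∀ θ ∈ Θ, I θ 0 = 0)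
    (hJ : ContinuousOn J Θ)
    (hLDPlow : ∀ θ ∈ Θ, LDPLowerAt (P θ) θhat a b (I θ) θ)
    (r δ : ℝ) (hr : 0 < r) (hδ : 0 < δ)
    (Hbar Hlow : ℝ → E → ℝ)
    (hHbarusc : ∀ w0 : E, EvEquiUSCAt Hbar w0)
    (hHlowlsc : ∀ w0 : E, EvEquiLSCAt Hlow w0)
    (haccurate : ∀ θ ∈ Θ,
      Filter.limsup
        (fun T => (((b T)⁻¹ : ℝ) : EReal) *
          ENNReal.log (P θ {ω | ¬(Hlow T (θhat T ω) ≤ J θ ∧ J θ ≤ Hbar T (θhat T ω))}))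
        atTop ≤ ((-r : ℝ) : EReal)) :
    ∀ θ ∈ Θ,
      Filter.limsup (fun T => ((upperCB Θ I J r δ a T θ - Hbar T θ : ℝ) : EReal)) atTop ≤ 0 ∧
      (0 : EReal) ≤
        Filter.liminf (fun T => ((lowerCB Θ I J r δ a T θ - Hlow T θ : ℝ) : EReal)) atTop := by
  intro θ hθ
  have hb : ∀ T, 0 ≤ b T := fun T => (hbpos T).le
  have hS := (haccurate θ hθ).trans_lt (EReal.coe_neg'.2 (neg_lt_zero.2 hr))
  have hCB : ∀ ε > 0, ∀ᶠ T in atTop,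
      upperCB Θ I J r δ a T θ ≤ J θ + ε ∧ J θ - ε ≤ lowerCB Θ I J r δ a T θ :=
    fun ε hε => eventually_upperCB_le_and_le_lowerCB hG1 hG2 hI0 hJ hatop hδ hθ hε
  have hHbar : ∀ ε > 0, ∀ᶠ T in atTop, J θ - ε ≤ Hbar T θ := fun ε hε =>
    (hLDPlow θ hθ).eventually_sub_le_of_evEquiUSCAt hb hatop (hI0 θ hθ) (hHbarusc θ) hS
      (fun T ω hlt hin => hlt.not_ge hin.2) hε
  have hHlow : ∀ ε > 0, ∀ᶠ T in atTop, -J θ - ε ≤ -Hlow T θ := fun ε hε =>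
    (hLDPlow θ hθ).eventually_sub_le_of_evEquiUSCAt hb hatop (hI0 θ hθ) (hHlowlsc θ) hS
      (fun T ω hlt hin => (neg_lt_neg_iff.1 hlt).not_ge hin.1) hε
  refine ⟨limsup_coe_le_zero_of_forall_eventually_le fun ε hε => ?_,
    zero_le_liminf_coe_of_forall_eventually_ge fun ε hε => ?_⟩
  · filter_upwards [hCB (ε / 2) (half_pos hε), hHbar (ε / 2) (half_pos hε)] with T hJ hH
    linarith [hJ.1]
  · filter_upwards [hCB (ε / 2) (half_pos hε), hHlow (ε / 2) (half_pos hε)] with T hJ hH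
    linarith [hJ.2]

/-- pointwise minimality: any exponentially accurate interval family
`[H̲_T, H̄_T]` with ev-equi-l.s.c. lower and ev-equi-u.s.c. upper endpoints eventually
contains `[J̲^δ_{T,r}, J̄^δ_{T,r}]` pointwise on `Θ`. -/
theorem stmt10 (Θ : Set E) (hΘ : Θ.Nonempty) (I : E → E → ENNReal) (J : E → ℝ)
    [MeasurableSpace E] [BorelSpace E]
    (P : E → Measure Ω) (hP : ∀ θ, IsProbabilityMeasure (P θ))
    (θhat : ℝ → Ω → E) (hθhatmeas : ∀ T, Measurable (θhat T))
    (b a : ℝ → ℝ) (hbpos : ∀ T, 0 < b T) (hbtop : Tendsto b atTop atTop)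
    (hadef : ∀ T, a T = Real.sqrt (T / b T)) (hatop : Tendsto a atTop atTop)
    (hG1 : GrowthG1 Θ I) (hG2 : GrowthG2 Θ I)
    (hI0 : ∀ θ ∈ Θ, I θ 0 = 0)
    (hJ : ContinuousOn J Θ)
    (hLDPlow : ∀ θ ∈ Θ, LDPLowerAt (P θ) θhat a b (I θ) θ)
    (r δ : ℝ) (hr : 0 < r) (hδ : 0 < δ)
    (Hbar Hlow : ℝ → E → ℝ)
    (hHbarmeas : ∀ T, Measurable (Hbar T)) (hHlowmeas : ∀ T, Measurable (Hlow T))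
    (hHbarusc : ∀ w0 : E, EvEquiUSCAt Hbar w0)
    (hHlowlsc : ∀ w0 : E, EvEquiLSCAt Hlow w0)
    (haccurate : ∀ θ ∈ Θ,
      Filter.limsup
        (fun T => (((b T)⁻¹ : ℝ) : EReal) *
          ENNReal.log (P θ {ω | ¬(Hlow T (θhat T ω) ≤ J θ ∧ J θ ≤ Hbar T (θhat T ω))}))
        atTop ≤ ((-r : ℝ) : EReal)) :
    ∀ θ ∈ Θ,
      Filter.limsup (fun T => ((upperCB Θ I J r δ a T θ - Hbar T θ : ℝ) : EReal)) atTop ≤ 0 ∧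
      (0 : EReal) ≤
        Filter.liminf (fun T => ((lowerCB Θ I J r δ a T θ - Hlow T θ : ℝ) : EReal)) atTop :=
  stmt10_general Θ I J P θhat b a hbpos hatop hG1 hG2 hI0 hJ hLDPlow r δ hr hδ Hbar Hlow hHbarusc
    hHlowlsc haccurate
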